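/- arXiv:2405.18684 — 2 statements merged into one kernel-verified Lean document; each statement's English description precedes it below -/
import Mathlib

section
/- For every n ≥ 1 and every pair of distinct grid points p, q ∈ Aₙ with p ≠ q, there exists a level-n expansion list L ∈ Ex(n, 0) and an index i such that L has p at position i and q at position i+1; that is, the factors indexed by p and q appear next to each other in at least one of the possible level-n expansions of 0. -/
/-- One-step expansion of a list: each entry `x` is replaced by the two entries
`(x+1)/2` and `(x-1)/2`, placed in either order. -/
inductive ExpandStep : List ℚ → List ℚ → Prop
  | nil : ExpandStep [] []
  | cons_lr (x : ℚ) {L L' : List ℚ} (h : ExpandStep L L') :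
      ExpandStep (x :: L) ((x + 1) / 2 :: (x - 1) / 2 :: L')
  | cons_rl (x : ℚ) {L L' : List ℚ} (h : ExpandStep L L') :
      ExpandStep (x :: L) ((x - 1) / 2 :: (x + 1) / 2 :: L')

/-- `ExpandN n L L'` : `L'` is obtained from `L` by `n` successive one-step
expansions. -/
inductive ExpandN : ℕ → List ℚ → List ℚ → Prop
  | zero (L : List ℚ) : ExpandN 0 L L
  | succ {n : ℕ} {L L' L'' : List ℚ} (h : ExpandN n L L') (h' : ExpandStep L' L'') :
      ExpandN (n + 1) L L''

/-- `Ex n s`: the set of lists obtainable from the singleton list `[s]` by `n`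
successive one-step expansions (the leaf-orderings at level `n` of the binary
expansion tree). -/
def Ex (n : ℕ) (s : ℚ) : Set (List ℚ) := {L | ExpandN n [s] L}

/-- The dyadic grid `Aₙ = {(2m+1)/2ⁿ : m ∈ ℤ, |2m+1| < 2ⁿ} ⊂ (−1,1)`. -/
def dyadicGrid (n : ℕ) : Set ℚ :=
  {x | ∃ m : ℤ, |2 * m + 1| < 2 ^ n ∧ x = (2 * (m : ℚ) + 1) / 2 ^ n}

/-!
The expansion tree rooted at `s` branches into `(s + 1)/2` and `(s - 1)/2`, and every level-`n`
expansion of `[s]` is obtained by concatenating level-`(n-1)` expansions of the two children, in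
either order. Hence any leaf can be brought to the front or to the back of an expansion. Two
distinct leaves either lie below the same child, and we recurse, or below different children,
and we put the first at the end of the left block and the second at the start of the right one.
Finally, every point of `Aₙ` is a leaf at depth `n` below `0`.
-/

section Expansion

variable {n : ℕ} {s c p q : ℚ} {A B L M L' M' : List ℚ}

theorem ExpandStep.append (h : ExpandStep L M) (h' : ExpandStep L' M') :
    ExpandStep (L ++ L') (M ++ M') := by
  induction h with
  | nil => simpa
  | cons_lr x _ ih => exact .cons_lr x ih
  | cons_rl x _ ih => exact .cons_rl x ih

theorem ExpandN.append (h : ExpandN n L M) (h' : ExpandN n L' M') :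
    ExpandN n (L ++ L') (M ++ M') := by
  induction h generalizing L' M' with
  | zero => cases h'; exact .zero _
  | succ _ hstep ih =>
    cases h' with
    | succ h₁ h₂ => exact .succ (ih h₁) (hstep.append h₂)

theorem ExpandN.head (h : ExpandStep L L') (h' : ExpandN n L' M) :
    ExpandN (n + 1) L M := by
  induction h' with
  | zero => exact .succ (.zero _) h
  | succ _ h₂ ih => exact .succ (ih h) h₂

/-- The sibling of a child `c` of `s` is `s - c`. -/
def IsChild (s c : ℚ) : Prop := c = (s + 1) / 2 ∨ c = (s - 1) / 2

theorem IsChild.sub (h : IsChild s c) : IsChild s (s - c) := by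
  unfold IsChild at *
  rcases h with rfl | rfl
  · right; ring
  · left; ring

theorem IsChild.eq_sub_of_ne {c' : ℚ} (h : IsChild s c) (h' : IsChild s c') (hne : c ≠ c') :
    c' = s - c := by
  unfold IsChild at *
  rcases h with rfl | rfl <;> rcases h' with rfl | rfl <;> first | exact absurd rfl hne | ring

theorem expandN_succ_of_isChild (hc : IsChild s c) (hA : ExpandN n [c] A)
    (hB : ExpandN n [s - c] B) : ExpandN (n + 1) [s] (A ++ B) := by
  refine ExpandN.head ?_ (hA.append hB)
  rcases hc with rfl | rfl
  · rw [show s - (s + 1) / 2 = (s - 1) / 2 by ring]; exact .cons_lr s .nil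
  · rw [show s - (s - 1) / 2 = (s + 1) / 2 by ring]; exact .cons_rl s .nil

theorem expandN_succ_of_isChild_swap (hc : IsChild s c) (hA : ExpandN n [c] A)
    (hB : ExpandN n [s - c] B) : ExpandN (n + 1) [s] (B ++ A) :=
  expandN_succ_of_isChild hc.sub hB (by rwa [sub_sub_cancel])

theorem exists_expandN (n : ℕ) (s : ℚ) : ∃ L, ExpandN n [s] L := by
  induction n generalizing s with
  | zero => exact ⟨[s], .zero _⟩
  | succ n ih =>
    obtain ⟨A, hA⟩ := ih ((s + 1) / 2)
    obtain ⟨B, hB⟩ := ih (s - (s + 1) / 2)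
    exact ⟨A ++ B, expandN_succ_of_isChild (.inl rfl) hA hB⟩

/-- `IsLeaf n s p`: `p` is a vertex at depth `n` of the expansion tree rooted at `s`. -/
inductive IsLeaf : ℕ → ℚ → ℚ → Prop
  | zero (s : ℚ) : IsLeaf 0 s s
  | child {n : ℕ} {s c p : ℚ} (hc : IsChild s c) (h : IsLeaf n c p) : IsLeaf (n + 1) s p

theorem IsLeaf.exists_expandN_cons (h : IsLeaf n s p) : ∃ L, ExpandN n [s] (p :: L) := by
  induction h with
  | zero s => exact ⟨[], .zero _⟩
  | @child n s c p hc _ ih =>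
    obtain ⟨A, hA⟩ := ih
    obtain ⟨B, hB⟩ := exists_expandN n (s - c)
    exact ⟨A ++ B, expandN_succ_of_isChild hc hA hB⟩

theorem IsLeaf.exists_expandN_concat (h : IsLeaf n s p) : ∃ L, ExpandN n [s] (L ++ [p]) := by
  induction h with
  | zero s => exact ⟨[], .zero _⟩
  | @child n s c p hc _ ih =>
    obtain ⟨A, hA⟩ := ih
    obtain ⟨B, hB⟩ := exists_expandN n (s - c)
    exact ⟨B ++ A, by simpa using expandN_succ_of_isChild_swap hc hA hB⟩

theorem IsLeaf.exists_expandN_adjacent (hp : IsLeaf n s p) (hq : IsLeaf n s q) (hpq : p ≠ q) :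
    ∃ A B, ExpandN n [s] (A ++ p :: q :: B) := by
  induction hp generalizing q with
  | zero => cases hq; exact absurd rfl hpq
  | @child n s c p hc hp ih =>
    obtain _ | @⟨_, _, c', _, hc', hq⟩ := hq
    by_cases hcc : c = c'
    · subst hcc
      obtain ⟨A, B, hAB⟩ := ih hq hpq
      obtain ⟨C, hC⟩ := exists_expandN n (s - c)
      exact ⟨A, B ++ C, by simpa using expandN_succ_of_isChild hc hAB hC⟩
    · rw [hc.eq_sub_of_ne hc' hcc] at hq
      obtain ⟨A, hA⟩ := hp.exists_expandN_concat
      obtain ⟨B, hB⟩ := hq.exists_expandN_cons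
      exact ⟨A, B, by simpa using expandN_succ_of_isChild hc hA hB⟩

end Expansion

/-- The leaf reached by reading the binary digits of `j` from the least significant one, a digit
`0` meaning the child `(s + 1)/2`. -/
theorem isLeaf_of_lt (n : ℕ) (s : ℚ) {j : ℕ} (hj : j < 2 ^ n) :
    IsLeaf n s ((s + 2 ^ n - 1 - 2 * j) / 2 ^ n) := by
  induction n generalizing s j with
  | zero => convert IsLeaf.zero s; simp_all
  | succ n ih =>
    rw [pow_succ] at hj
    obtain ⟨j', rfl | rfl⟩ := Nat.even_or_odd' j
    · convert IsLeaf.child (.inl rfl) (ih ((s + 1) / 2) (j := j') (by omega)) using 1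
      push_cast; field_simp; ring
    · convert IsLeaf.child (.inr rfl) (ih ((s - 1) / 2) (j := j') (by omega)) using 1
      push_cast; field_simp; ring

theorem isLeaf_of_mem_dyadicGrid {n : ℕ} (hn : 1 ≤ n) {p : ℚ} (hp : p ∈ dyadicGrid n) :
    IsLeaf n 0 p := by
  obtain ⟨n, rfl⟩ := Nat.exists_eq_add_of_le' hn
  obtain ⟨m, hm, rfl⟩ := hp
  rw [pow_succ, abs_lt] at hm
  obtain ⟨j, hj⟩ : ∃ j : ℕ, (j : ℤ) = 2 ^ n - 1 - m := ⟨(2 ^ n - 1 - m).toNat, by omega⟩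
  convert isLeaf_of_lt (n + 1) 0 (j := j) (by zify; rw [pow_succ]; omega) using 1
  rw [show (j : ℚ) = 2 ^ n - 1 - m by exact_mod_cast hj]
  ring

/-- **Lemma 2.** For every `n ≥ 1` and distinct grid points `p, q ∈ Aₙ`, there
is a level-`n` expansion list `L ∈ Ex n 0` in which the factors indexed by `p`
and `q` appear next to each other (at positions `i` and `i+1`). -/
theorem adjacent_in_some_expansion :
    ∀ n : ℕ, 1 ≤ n → ∀ p ∈ dyadicGrid n, ∀ q ∈ dyadicGrid n, p ≠ q →
      ∃ L ∈ Ex n 0, ∃ i : ℕ, L[i]? = some p ∧ L[i + 1]? = some q := by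
  intro n hn p hp q hq hpq
  obtain ⟨A, B, hAB⟩ := (isLeaf_of_mem_dyadicGrid hn hp).exists_expandN_adjacent
    (isLeaf_of_mem_dyadicGrid hn hq) hpq
  refine ⟨A ++ p :: q :: B, hAB, A.length, ?_, ?_⟩ <;> simp
end

section
/- For every n ≥ 1 and every level-n expansion list L ∈ Ex(n, 0), the list L has length 2ⁿ, has no repeated entries, and the set of its entries is exactly the dyadic grid Aₙ = {(2m+1)/2ⁿ : m ∈ ℤ, |2m+1| < 2ⁿ}; in particular, every grid point of Aₙ appears exactly once in L. -/
/-!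
Forgetting the order, a one-step expansion is the multiset bind with
`x ↦ {(x + 1)/2, (x - 1)/2}`, so every choice of orders yields the same multiset. Indexing the
level-`n` grid as `(2i + 1 - 2ⁿ)/2ⁿ` for `i < 2ⁿ`, the maps `x ↦ (x - 1)/2` and `x ↦ (x + 1)/2`
send index `i` to the level-`(n + 1)` indices `i` and `2ⁿ + i`, which together exhaust `[0, 2ⁿ⁺¹)`
exactly once. Hence the level-`n` expansion of `[0]` is the level-`n` grid, counted once each.
-/

-- Index `i` corresponds to `m = i - 2ⁿ⁻¹` in `dyadicGrid n`.
def gridPoint (n i : ℕ) : ℚ := (2 * i + 1 - 2 ^ n) / 2 ^ n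

def gridMultiset (n : ℕ) : Multiset ℚ := (Multiset.range (2 ^ n)).map (gridPoint n)

def expandPoint (x : ℚ) : Multiset ℚ := {(x + 1) / 2, (x - 1) / 2}

theorem ExpandStep.coe_eq_bind {L L' : List ℚ} (h : ExpandStep L L') :
    (L' : Multiset ℚ) = (L : Multiset ℚ).bind expandPoint := by
  induction h with
  | nil => rfl
  | cons_lr x _ ih =>
    simp only [← Multiset.cons_coe, Multiset.cons_bind, ih, expandPoint, Multiset.insert_eq_cons,
      Multiset.cons_add, Multiset.singleton_add]
  | cons_rl x _ ih =>
    simp only [← Multiset.cons_coe, Multiset.cons_bind, ih, expandPoint, Multiset.insert_eq_cons,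
      Multiset.cons_add, Multiset.singleton_add, Multiset.cons_swap]

theorem gridPoint_add_one_div_two (n i : ℕ) :
    (gridPoint n i + 1) / 2 = gridPoint (n + 1) (2 ^ n + i) := by
  simp only [gridPoint]
  field_simp
  push_cast
  ring

theorem gridPoint_sub_one_div_two (n i : ℕ) :
    (gridPoint n i - 1) / 2 = gridPoint (n + 1) i := by
  simp only [gridPoint]
  field_simp
  ring

theorem range_two_pow_succ (n : ℕ) :
    Multiset.range (2 ^ (n + 1)) =
      Multiset.range (2 ^ n) + (Multiset.range (2 ^ n)).map (2 ^ n + ·) := by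
  rw [pow_succ, mul_two, ← Multiset.coe_range, List.range_add, ← Multiset.coe_add,
    ← Multiset.map_coe]
  rfl

theorem gridMultiset_bind_expandPoint (n : ℕ) :
    (gridMultiset n).bind expandPoint = gridMultiset (n + 1) := by
  have expand_eq_add (x : ℚ) : expandPoint x = {(x - 1) / 2} + {(x + 1) / 2} := by
    rw [Multiset.singleton_add]
    exact Multiset.pair_comm _ _
  simp only [gridMultiset, expand_eq_add, Multiset.bind_add,
    Multiset.bind_singleton, gridPoint_add_one_div_two, gridPoint_sub_one_div_two,
    range_two_pow_succ, Multiset.map_add, Multiset.map_map, Function.comp_def]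

theorem ExpandN.coe_eq_gridMultiset {n : ℕ} {L : List ℚ} (h : ExpandN n [0] L) :
    (L : Multiset ℚ) = gridMultiset n := by
  induction n generalizing L with
  | zero => cases h; norm_num [gridMultiset, gridPoint]
  | succ n ih =>
    obtain _ | ⟨hn, hstep⟩ := h
    rw [hstep.coe_eq_bind, ih hn, gridMultiset_bind_expandPoint]

theorem card_gridMultiset (n : ℕ) : Multiset.card (gridMultiset n) = 2 ^ n := by
  simp [gridMultiset]

theorem gridPoint_injective (n : ℕ) : Function.Injective (gridPoint n) := by
  intro i j hij
  simp only [gridPoint] at hij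
  field_simp at hij
  exact_mod_cast (by linarith : (i : ℚ) = j)

theorem nodup_gridMultiset (n : ℕ) : (gridMultiset n).Nodup :=
  (Multiset.nodup_range _).map (gridPoint_injective n)

theorem gridPoint_succ_eq (n i : ℕ) :
    gridPoint (n + 1) i = (2 * (((i : ℤ) - 2 ^ n : ℤ) : ℚ) + 1) / 2 ^ (n + 1) := by
  simp only [gridPoint]
  push_cast
  ring

theorem mem_gridMultiset_succ_iff {n : ℕ} {x : ℚ} :
    x ∈ gridMultiset (n + 1) ↔ x ∈ dyadicGrid (n + 1) := by
  simp only [gridMultiset, Multiset.mem_map, Multiset.mem_range, dyadicGrid]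
  constructor
  · rintro ⟨i, hi, rfl⟩
    refine ⟨i - 2 ^ n, ?_, gridPoint_succ_eq n i⟩
    have hi' : (i : ℤ) < 2 ^ (n + 1) := by exact_mod_cast hi
    rw [pow_succ] at hi'
    rw [abs_lt, pow_succ]
    constructor <;> linarith
  · rintro ⟨m, hm, rfl⟩
    rw [abs_lt, pow_succ] at hm
    lift m + 2 ^ n to ℕ using (by linarith) with i hi
    refine ⟨i, ?_, ?_⟩
    · rw [pow_succ]; exact_mod_cast (by linarith : (i : ℤ) < 2 ^ n * 2)
    · rw [gridPoint_succ_eq, hi]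
      push_cast
      ring_nf

/-- **Leaves of the expansion tree (Eq. 16–17).** Every level-`n` expansion list
`L ∈ Ex n 0` (for `n ≥ 1`) has length `2ⁿ`, has no repeated entries, and its set
of entries is exactly the dyadic grid `Aₙ`; hence every point of `Aₙ` appears
exactly once in `L`. -/
theorem expansion_leaves_are_dyadic_grid :
    ∀ n : ℕ, 1 ≤ n → ∀ L ∈ Ex n 0,
      L.length = 2 ^ n ∧ L.Nodup ∧ (∀ x : ℚ, x ∈ L ↔ x ∈ dyadicGrid n) := by
  intro n hn L hL
  have hgrid : (L : Multiset ℚ) = gridMultiset n := ExpandN.coe_eq_gridMultiset hL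
  refine ⟨?_, ?_, fun x => ?_⟩
  · rw [← Multiset.coe_card, hgrid, card_gridMultiset]
  · rw [← Multiset.coe_nodup, hgrid]
    exact nodup_gridMultiset n
  · obtain ⟨n, rfl⟩ := Nat.exists_eq_add_of_le' hn
    rw [← Multiset.mem_coe, hgrid, mem_gridMultiset_succ_iff]
end
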